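/- arXiv:1806.00904 — 4 statements merged into one kernel-verified Lean document; each statement's English description precedes it below -/
import Mathlib

section
/- Let X ∈ R^{n×r}, let X̄ = X O₁ where O₁ ∈ O(r) minimizes ‖U − XO‖_F over O ∈ O(r), and let H = U − X̄. Then the matrix Hᵀ X̄ is symmetric. -/
/-!
Since `‖U - XO‖_F² = ‖U‖_F² + ‖X‖_F² - 2 tr(Uᵀ X O)` for orthogonal `O`, the minimizer `O₁`
maximizes `tr(Uᵀ X O)`, so `A = Uᵀ X̄` satisfies `tr(A Q) ≤ tr A` for every orthogonal `Q`.
Testing this against the rotations in the coordinate planes `(i, j)` gives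
`(c - 1)(Aᵢᵢ + Aⱼⱼ) + s (Aᵢⱼ - Aⱼᵢ) ≤ 0` on the whole unit circle, which forces `Aᵢⱼ = Aⱼᵢ`.
Hence `Hᵀ X̄ = A - X̄ᵀ X̄` is symmetric.
-/

open Matrix

section PlaneRotation

variable {n R : Type*} [Fintype n] [DecidableEq n] [CommRing R]

/-- For `c ^ 2 + s ^ 2 = 1`, the rotation with cosine `c` and sine `s` in the `(i, j)` coordinate
plane. -/
def planeRotation (i j : n) (c s : R) : Matrix n n R :=
  1 + (c - 1) • (single i i 1 + single j j 1) + s • (single j i 1 - single i j 1)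

lemma planeRotation_mul_transpose {i j : n} (hij : i ≠ j) {c s : R}
    (hcs : c ^ 2 + s ^ 2 = 1) : planeRotation i j c s * (planeRotation i j c s)ᵀ = 1 := by
  simp only [planeRotation, transpose_add, transpose_smul, transpose_sub, transpose_one,
    transpose_single, mul_add, add_mul, sub_mul, mul_sub, smul_mul_assoc, mul_smul_comm,
    single_mul_single_same, single_mul_single_of_ne, hij, hij.symm, ne_eq, not_false_eq_true,
    mul_one, one_mul]
  linear_combination (norm := module) hcs • single i i (1 : R) + hcs • single j j (1 : R)

lemma trace_mul_planeRotation (A : Matrix n n R) (i j : n) (c s : R) :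
    trace (A * planeRotation i j c s)
      = trace A + (c - 1) * (A i i + A j j) + s * (A i j - A j i) := by
  simp only [planeRotation, Matrix.mul_add, Matrix.mul_sub, Matrix.mul_one, mul_smul_comm,
    trace_add, trace_sub, trace_smul, trace_mul_single, MulOpposite.op_one, one_smul, smul_eq_mul]

end PlaneRotation

lemma eq_zero_of_forall_mul_le_sq_mul {d S : ℝ} (h : ∀ t : ℝ, t * d ≤ t ^ 2 * S) : d = 0 := by
  have hm : 0 < |S| + 1 := by positivity
  have ht := h (d / (2 * (|S| + 1)))
  rw [div_mul_eq_mul_div, div_pow, div_mul_eq_mul_div,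
    div_le_div_iff₀ (by positivity) (by positivity)] at ht
  have hS : d ^ 2 * S ≤ d ^ 2 * |S| := mul_le_mul_of_nonneg_left (le_abs_self S) (sq_nonneg d)
  have hd : d ^ 2 ≤ 0 := by nlinarith
  exact pow_eq_zero_iff two_ne_zero |>.1 (le_antisymm hd (sq_nonneg d))

lemma eq_zero_of_forall_sq_add_sq_eq_one {d S : ℝ}
    (h : ∀ c s : ℝ, c ^ 2 + s ^ 2 = 1 → (c - 1) * S + s * d ≤ 0) : d = 0 := by
  refine eq_zero_of_forall_mul_le_sq_mul (S := S) fun t => ?_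
  have hpos : 0 < 1 + t ^ 2 := by positivity
  -- the rational parametrization of the unit circle
  have h_circle : ((1 - t ^ 2) / (1 + t ^ 2)) ^ 2 + (2 * t / (1 + t ^ 2)) ^ 2 = 1 := by
    field_simp
    ring
  have h_value : ((1 - t ^ 2) / (1 + t ^ 2) - 1) * S + 2 * t / (1 + t ^ 2) * d
      = 2 * (t * d - t ^ 2 * S) / (1 + t ^ 2) := by
    field_simp
    ring
  have ht := h _ _ h_circle
  rw [h_value, div_le_iff₀ hpos] at ht
  linarith

lemma isSymm_of_forall_trace_mul_le {n : Type*} [Fintype n] [DecidableEq n] {A : Matrix n n ℝ}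
    (h : ∀ Q : Matrix n n ℝ, Q * Qᵀ = 1 → trace (A * Q) ≤ trace A) : A.IsSymm := by
  refine IsSymm.ext fun i j => ?_
  rcases eq_or_ne i j with rfl | hij
  · rfl
  have h_antisymm := eq_zero_of_forall_sq_add_sq_eq_one (d := A i j - A j i) (S := A i i + A j j)
    fun c s hcs => by
      have hQ := h _ (planeRotation_mul_transpose hij hcs)
      rw [trace_mul_planeRotation] at hQ
      linarith
  linarith

section Frobenius

variable {m n : Type*} [Fintype m] [Fintype n]

lemma sum_sum_sq_eq_trace_transpose_mul_self {R : Type*} [CommSemiring R] (M : Matrix m n R) :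
    ∑ i, ∑ j, M i j ^ 2 = trace (Mᵀ * M) := by
  rw [Finset.sum_comm]
  simp [trace, mul_apply, sq]

variable [DecidableEq n]

lemma trace_transpose_mul_self_sub_mul {R : Type*} [CommRing R] (U X : Matrix m n R)
    {O : Matrix n n R} (hO : O * Oᵀ = 1) :
    trace ((U - X * O)ᵀ * (U - X * O))
      = trace (Uᵀ * U) + trace (Xᵀ * X) - 2 * trace (Uᵀ * (X * O)) := by
  have h_cross : trace ((X * O)ᵀ * U) = trace (Uᵀ * (X * O)) := by
    rw [← trace_transpose, transpose_mul, transpose_transpose]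
  have h_norm : trace ((X * O)ᵀ * (X * O)) = trace (Xᵀ * X) := by
    rw [transpose_mul, Matrix.mul_assoc, trace_mul_comm, Matrix.mul_assoc, Matrix.mul_assoc, hO,
      Matrix.mul_one, trace_mul_comm]
  simp only [transpose_sub, Matrix.sub_mul, Matrix.mul_sub, trace_sub, h_cross, h_norm]
  ring

lemma trace_le_of_frobenius_le (U X : Matrix m n ℝ) {O₁ O : Matrix n n ℝ}
    (hO₁ : O₁ * O₁ᵀ = 1) (hO : O * Oᵀ = 1)
    (h : √(∑ i, ∑ j, (U - X * O₁) i j ^ 2) ≤ √(∑ i, ∑ j, (U - X * O) i j ^ 2)) :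
    trace (Uᵀ * (X * O)) ≤ trace (Uᵀ * (X * O₁)) := by
  rw [Real.sqrt_le_sqrt_iff (by positivity), sum_sum_sq_eq_trace_transpose_mul_self,
    sum_sum_sq_eq_trace_transpose_mul_self, trace_transpose_mul_self_sub_mul U X hO₁,
    trace_transpose_mul_self_sub_mul U X hO] at h
  linarith

end Frobenius

/-- If `O₁` is orthogonal and minimizes `‖U − XO‖_F` over the orthogonal group,
and `X̄ = XO₁`, `H = U − X̄`, then `Hᵀ X̄` is symmetric. -/
theorem H_transpose_Xbar_symm (n r : ℕ) (X U : Matrix (Fin n) (Fin r) ℝ)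
    (O₁ : Matrix (Fin r) (Fin r) ℝ) (hO₁ : O₁ * O₁ᵀ = 1)
    (hmin : ∀ O : Matrix (Fin r) (Fin r) ℝ, O * Oᵀ = 1 →
      Real.sqrt (∑ i, ∑ j, ((U - X * O₁) i j) ^ 2)
        ≤ Real.sqrt (∑ i, ∑ j, ((U - X * O) i j) ^ 2)) :
    ((U - X * O₁)ᵀ * (X * O₁)).IsSymm := by
  have hA : (Uᵀ * (X * O₁)).IsSymm := by
    refine isSymm_of_forall_trace_mul_le fun Q hQ => ?_
    have hO₁Q : O₁ * Q * (O₁ * Q)ᵀ = 1 := by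
      rw [transpose_mul, Matrix.mul_assoc, ← Matrix.mul_assoc Q, hQ, Matrix.one_mul, hO₁]
    simpa only [Matrix.mul_assoc] using trace_le_of_frobenius_le U X hO₁ hO₁Q (hmin _ hO₁Q)
  rw [transpose_sub, Matrix.sub_mul]
  exact hA.sub (by rw [IsSymm, transpose_mul, transpose_transpose])
end

section
/- Let X ∈ R^{n×r} have orthogonal columns x₁,…,x_r, and let σ_r = min_s ‖x_s‖² > 0 and σ₁ = max_s ‖x_s‖². Let X̄ = XO for some O ∈ O(r), H ∈ R^{n×r}, and let a ~ N(0, I_n) be a standard Gaussian vector. Then σ_r ‖H‖_F² + tr²(Hᵀ X̄) + tr(Hᵀ X̄ Hᵀ X̄) ≤ E[(aᵀ H X̄ᵀ a)²] ≤ σ₁ ‖H‖_F² + tr²(Hᵀ X̄) + tr(Hᵀ X̄ Hᵀ X̄). -/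
open MeasureTheory ProbabilityTheory Matrix

/-! `aᵀMa` has second moment `(tr M)² + tr(MMᵀ) + tr(M²)` under the standard Gaussian, by
Isserlis' formula `E[aᵢaⱼaₖaₗ] = δᵢⱼδₖₗ + δᵢₖδⱼₗ + δᵢₗδⱼₖ`, whose ingredients are the moments
`1, 0, 1, 0, 3` of `N(0, 1)`, read off from its moment generating function `exp (t² / 2)`.
For `M = H X̄ᵀ = (HOᵀ) Xᵀ` the middle term is `tr(HOᵀ D (HOᵀ)ᵀ)` with `D = XᵀX` diagonal with entries
the squared column norms, so it lies between `σ_r ‖HOᵀ‖_F²` and `σ₁ ‖HOᵀ‖_F²`, and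
`‖HOᵀ‖_F = ‖H‖_F` as `O` is orthogonal. -/

section GaussianMoments

open Real Polynomial

noncomputable def expSqHalfDerivPoly : ℕ → ℝ[X]
  | 0 => 1
  | k + 1 => derivative (expSqHalfDerivPoly k) + X * expSqHalfDerivPoly k

lemma iteratedDeriv_exp_sq_half (k : ℕ) :
    iteratedDeriv k (fun t ↦ exp (t ^ 2 / 2))
      = fun t ↦ (expSqHalfDerivPoly k).eval t * exp (t ^ 2 / 2) := by
  induction k with
  | zero => simp [expSqHalfDerivPoly]
  | succ k ih =>
    rw [iteratedDeriv_succ, ih]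
    funext t
    have h : HasDerivAt (fun t ↦ t ^ 2 / 2) t t := by
      simpa using (hasDerivAt_pow 2 t).div_const 2
    refine (((expSqHalfDerivPoly k).hasDerivAt t).mul h.exp).deriv.trans ?_
    simp only [expSqHalfDerivPoly, eval_add, eval_mul, eval_X]
    ring

lemma integral_pow_gaussianReal_eq_eval (k : ℕ) :
    ∫ x, x ^ k ∂gaussianReal 0 1 = (expSqHalfDerivPoly k).eval 0 := by
  have h := iteratedDeriv_mgf_zero (X := id) (μ := gaussianReal 0 1) (by simp) k
  simpa [mgf_id_gaussianReal, iteratedDeriv_exp_sq_half] using h.symm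

lemma integral_sq_gaussianReal : ∫ x, x ^ 2 ∂gaussianReal 0 1 = 1 := by
  simp [integral_pow_gaussianReal_eq_eval, expSqHalfDerivPoly]

lemma integral_pow_three_gaussianReal : ∫ x, x ^ 3 ∂gaussianReal 0 1 = 0 := by
  simp [integral_pow_gaussianReal_eq_eval, expSqHalfDerivPoly]

lemma integral_pow_four_gaussianReal : ∫ x, x ^ 4 ∂gaussianReal 0 1 = 3 := by
  simp [integral_pow_gaussianReal_eq_eval, expSqHalfDerivPoly]
  norm_num

lemma integrable_pow_gaussianReal (k : ℕ) : Integrable (fun x : ℝ ↦ x ^ k) (gaussianReal 0 1) :=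
  integrable_pow_of_mem_interior_integrableExpSet (X := id) (by simp) k

end GaussianMoments

lemma Multiset.prod_map_eq_prod_pow_count {ι M : Type*} [Fintype ι] [DecidableEq ι]
    [CommMonoid M] (s : Multiset ι) (f : ι → M) : (s.map f).prod = ∏ m, f m ^ s.count m := by
  rw [Finset.prod_multiset_map_count]
  refine Finset.prod_subset (Finset.subset_univ _) fun m _ hm ↦ ?_
  rw [Multiset.count_eq_zero.mpr (by simpa using hm), pow_zero]

section Isserlis

variable {ι : Type*} [Fintype ι]

lemma integral_multiset_prod_pi [DecidableEq ι] {μ : Measure ℝ} [SigmaFinite μ] (s : Multiset ι) :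
    ∫ a, (s.map a).prod ∂(Measure.pi fun _ : ι ↦ μ) = ∏ m, ∫ x, x ^ s.count m ∂μ := by
  simp_rw [Multiset.prod_map_eq_prod_pow_count]
  exact integral_fintype_prod_eq_prod fun m x ↦ x ^ s.count m

lemma integral_mul_four_pi_gaussianReal [DecidableEq ι] (i j k l : ι) :
    ∫ a, a i * a j * a k * a l ∂(Measure.pi fun _ : ι ↦ gaussianReal 0 1)
      = (if i = j then 1 else 0) * (if k = l then 1 else 0)
        + (if i = k then 1 else 0) * (if j = l then 1 else 0)
        + (if i = l then 1 else 0) * (if j = k then 1 else 0) := by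
  have hprod (a : ι → ℝ) : a i * a j * a k * a l = (({i, j, k, l} : Multiset ι).map a).prod := by
    simp [mul_assoc]
  simp_rw [hprod, integral_multiset_prod_pi]
  rw [← Finset.prod_subset (Finset.subset_univ ({i, j, k, l} : Multiset ι).toFinset)
    fun m _ hm ↦ by rw [Multiset.count_eq_zero.mpr (mt Multiset.mem_toFinset.mpr hm)]; simp]
  by_cases i = j <;> by_cases i = k <;> by_cases i = l <;> by_cases j = k <;> by_cases j = l <;>
    by_cases k = l <;> subst_vars <;>
    simp_all [Multiset.count_cons, eq_comm, integral_sq_gaussianReal,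
      integral_pow_three_gaussianReal, integral_pow_four_gaussianReal, one_add_one_eq_two,
      two_add_one_eq_three]

@[fun_prop]
lemma integrable_mul_four_pi_gaussianReal (i j k l : ι) :
    Integrable (fun a : ι → ℝ ↦ a i * a j * a k * a l) (Measure.pi fun _ : ι ↦ gaussianReal 0 1) := by
  classical
  have hprod (a : ι → ℝ) : a i * a j * a k * a l = ∏ m, a m ^ ({i, j, k, l} : Multiset ι).count m := by
    rw [← Multiset.prod_map_eq_prod_pow_count]
    simp [mul_assoc]
  simp_rw [hprod]
  exact Integrable.fintype_prod fun m ↦ integrable_pow_gaussianReal _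

lemma sq_sum_sum_mul_mul (M : Matrix ι ι ℝ) (a : ι → ℝ) :
    (∑ i, ∑ j, a i * M i j * a j) ^ 2
      = ∑ i, ∑ j, ∑ k, ∑ l, M i j * M k l * (a i * a j * a k * a l) := by
  simp_rw [sq, Finset.sum_mul, Finset.mul_sum]
  exact Finset.sum_congr rfl fun i _ ↦ Finset.sum_congr rfl fun j _ ↦ Finset.sum_congr rfl
    fun k _ ↦ Finset.sum_congr rfl fun l _ ↦ by ring

lemma integral_sq_quadForm_pi_gaussianReal (M : Matrix ι ι ℝ) :
    ∫ a, (∑ i, ∑ j, a i * M i j * a j) ^ 2 ∂(Measure.pi fun _ : ι ↦ gaussianReal 0 1)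
      = trace M ^ 2 + trace (M * Mᵀ) + trace (M * M) := by
  classical
  simp_rw [sq_sum_sum_mul_mul]
  simp (disch := fun_prop) only [integral_finsetSum, integral_const_mul,
    integral_mul_four_pi_gaussianReal]
  simp [mul_add, Finset.sum_add_distrib, trace, Matrix.mul_apply, sq, Finset.sum_mul_sum]

end Isserlis

section Frobenius

variable {m n R : Type*} [Fintype m] [DecidableEq n] [CommRing R]

lemma transpose_mul_self_eq_diagonal {X : Matrix m n R}
    (horth : ∀ s t, s ≠ t → ∑ i, X i s * X i t = 0) :
    Xᵀ * X = diagonal fun s ↦ ∑ i, X i s ^ 2 := by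
  ext s t
  by_cases hst : s = t
  · simp [hst, Matrix.mul_apply, sq]
  · simp [hst, Matrix.mul_apply, horth s t hst]

variable [Fintype n]

lemma trace_mul_diagonal_mul_transpose (K : Matrix m n R) (d : n → R) :
    trace (K * diagonal d * Kᵀ) = ∑ i, ∑ s, d s * K i s ^ 2 := by
  simp only [trace, diag, Matrix.mul_apply, diagonal_apply, mul_ite, mul_zero,
    Finset.sum_ite_eq', Finset.mem_univ, if_true, transpose_apply]
  refine Finset.sum_congr rfl fun i _ ↦ Finset.sum_congr rfl fun s _ ↦ ?_
  ring

lemma trace_mul_transpose_self (A : Matrix m n R) : trace (A * Aᵀ) = ∑ i, ∑ j, A i j ^ 2 := by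
  simpa using trace_mul_diagonal_mul_transpose A 1

lemma sum_sq_mul_transpose_of_mul_transpose_eq_one (H : Matrix m n R) {O : Matrix n n R}
    (hO : O * Oᵀ = 1) : ∑ i, ∑ j, (H * Oᵀ) i j ^ 2 = ∑ i, ∑ j, H i j ^ 2 := by
  rw [← trace_mul_transpose_self, ← trace_mul_transpose_self, transpose_mul, transpose_transpose,
    Matrix.mul_assoc, ← Matrix.mul_assoc Oᵀ, mul_eq_one_comm.mp hO, Matrix.one_mul]

variable [LinearOrder R] [IsStrictOrderedRing R]

lemma le_trace_mul_diagonal_mul_transpose (K : Matrix m n R) {d : n → R} {c : R}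
    (hd : ∀ s, c ≤ d s) : c * ∑ i, ∑ s, K i s ^ 2 ≤ trace (K * diagonal d * Kᵀ) := by
  simp only [trace_mul_diagonal_mul_transpose, Finset.mul_sum]
  gcongr with i _ s _
  exact hd s

lemma trace_mul_diagonal_mul_transpose_le (K : Matrix m n R) {d : n → R} {c : R}
    (hd : ∀ s, d s ≤ c) : trace (K * diagonal d * Kᵀ) ≤ c * ∑ i, ∑ s, K i s ^ 2 := by
  simp only [trace_mul_diagonal_mul_transpose, Finset.mul_sum]
  gcongr with i _ s _
  exact hd s

end Frobenius

theorem expectation_cross_quadratic_bounds_general (n r : ℕ) (X : Matrix (Fin n) (Fin r) ℝ)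
    (horth : ∀ s t : Fin r, s ≠ t → ∑ i, X i s * X i t = 0)
    (σr σ1 : ℝ)
    (hσr : IsLeast (Set.range fun s : Fin r => ∑ i, (X i s) ^ 2) σr)
    (hσ1 : IsGreatest (Set.range fun s : Fin r => ∑ i, (X i s) ^ 2) σ1)
    (O : Matrix (Fin r) (Fin r) ℝ) (hO : O * Oᵀ = 1)
    (H : Matrix (Fin n) (Fin r) ℝ) :
    σr * (∑ i, ∑ j, (H i j) ^ 2) + (Matrix.trace (Hᵀ * (X * O))) ^ 2
        + Matrix.trace (Hᵀ * (X * O) * (Hᵀ * (X * O)))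
      ≤ (∫ a : Fin n → ℝ, (∑ i, ∑ j, a i * (H * (X * O)ᵀ) i j * a j) ^ 2
          ∂(Measure.pi fun _ : Fin n => gaussianReal 0 1)) ∧
    (∫ a : Fin n → ℝ, (∑ i, ∑ j, a i * (H * (X * O)ᵀ) i j * a j) ^ 2
          ∂(Measure.pi fun _ : Fin n => gaussianReal 0 1))
      ≤ σ1 * (∑ i, ∑ j, (H i j) ^ 2) + (Matrix.trace (Hᵀ * (X * O))) ^ 2
        + Matrix.trace (Hᵀ * (X * O) * (Hᵀ * (X * O))) := by
  set Y := X * O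
  have htrace : trace (H * Yᵀ) = trace (Hᵀ * Y) := by
    simpa using (trace_transpose_mul H Yᵀ).symm
  have htrace_sq : trace (H * Yᵀ * (H * Yᵀ)) = trace (Hᵀ * Y * (Hᵀ * Y)) := by
    rw [← trace_transpose (Hᵀ * Y * (Hᵀ * Y)), Matrix.mul_assoc, trace_mul_comm]
    simp [transpose_mul, Matrix.mul_assoc]
  have hfrob : H * Yᵀ * (H * Yᵀ)ᵀ
      = H * Oᵀ * diagonal (fun s ↦ ∑ i, X i s ^ 2) * (H * Oᵀ)ᵀ := by
    simp [Y, ← transpose_mul_self_eq_diagonal horth, transpose_mul, Matrix.mul_assoc]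
  have hlow := le_trace_mul_diagonal_mul_transpose (H * Oᵀ) fun s ↦ hσr.2 ⟨s, rfl⟩
  have hhigh := trace_mul_diagonal_mul_transpose_le (H * Oᵀ) fun s ↦ hσ1.2 ⟨s, rfl⟩
  rw [sum_sq_mul_transpose_of_mul_transpose_eq_one H hO, ← hfrob] at hlow hhigh
  rw [integral_sq_quadForm_pi_gaussianReal, htrace, htrace_sq]
  constructor <;> linarith

/-- For `X` with orthogonal columns, `σ_r = min_s ‖x_s‖²`, `σ₁ = max_s ‖x_s‖²`,
`X̄ = XO` with `O` orthogonal, `H ∈ R^{n×r}` and `a ~ N(0,I_n)`: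
`σ_r‖H‖_F² + tr²(HᵀX̄) + tr(HᵀX̄HᵀX̄) ≤ E[(aᵀHX̄ᵀa)²] ≤ σ₁‖H‖_F² + tr²(HᵀX̄) + tr(HᵀX̄HᵀX̄)`. -/
theorem expectation_cross_quadratic_bounds (n r : ℕ) (X : Matrix (Fin n) (Fin r) ℝ)
    (horth : ∀ s t : Fin r, s ≠ t → ∑ i, X i s * X i t = 0)
    (σr σ1 : ℝ) (hpos : 0 < σr)
    (hσr : IsLeast (Set.range fun s : Fin r => ∑ i, (X i s) ^ 2) σr)
    (hσ1 : IsGreatest (Set.range fun s : Fin r => ∑ i, (X i s) ^ 2) σ1)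
    (O : Matrix (Fin r) (Fin r) ℝ) (hO : O * Oᵀ = 1)
    (H : Matrix (Fin n) (Fin r) ℝ) :
    σr * (∑ i, ∑ j, (H i j) ^ 2) + (Matrix.trace (Hᵀ * (X * O))) ^ 2
        + Matrix.trace (Hᵀ * (X * O) * (Hᵀ * (X * O)))
      ≤ (∫ a : Fin n → ℝ, (∑ i, ∑ j, a i * (H * (X * O)ᵀ) i j * a j) ^ 2
          ∂(Measure.pi fun _ : Fin n => gaussianReal 0 1)) ∧
    (∫ a : Fin n → ℝ, (∑ i, ∑ j, a i * (H * (X * O)ᵀ) i j * a j) ^ 2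
          ∂(Measure.pi fun _ : Fin n => gaussianReal 0 1))
      ≤ σ1 * (∑ i, ∑ j, (H i j) ^ 2) + (Matrix.trace (Hᵀ * (X * O))) ^ 2
        + Matrix.trace (Hᵀ * (X * O) * (Hᵀ * (X * O))) :=
  expectation_cross_quadratic_bounds_general n r X horth σr σ1 hσr hσ1 O hO H
end

section
/- Suppose f : R^{n×r} → R has a gradient surrogate G : R^{n×r} → R^{n×r} satisfying the regularity condition: for all U with d(U) ≤ ε, ⟨G(U), U − X̄_U⟩ ≥ (σ_r/ν)·‖U − X̄_U‖_F² + (1/(λ‖X‖_F²))·‖G(U)‖_F², where X̄_U is a closest point to U in 𝒳 = {XO : O ∈ O(r)} and d(U) = ‖U − X̄_U‖_F. If d(U_k) ≤ ε and μ ≤ min(ν/(2σ_r), 2/(λ‖X‖_F²)), then U_{k+1} := U_k − μ G(U_k) satisfies d(U_{k+1}) ≤ √(1 − 2μσ_r/ν) · d(U_k). -/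
open Matrix

/-- Performance of one step of the update rule under the regularity condition:
if `d(U_k) ≤ ε` and `μ ≤ min(ν/(2σ_r), 2/(λ‖X‖_F²))`, then
`d(U_{k+1}) ≤ √(1 − 2μσ_r/ν)·d(U_k)` where `U_{k+1} = U_k − μ G(U_k)`. -/
theorem regularity_descent_step (n r : ℕ) (X : Matrix (Fin n) (Fin r) ℝ)
    (σr ν lam ε μ : ℝ) (hσr : 0 < σr) (hν : 0 < ν) (hlam : 0 < lam) (hμ0 : 0 < μ)
    (Xbar : Matrix (Fin n) (Fin r) ℝ → Matrix (Fin n) (Fin r) ℝ)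
    (hXbar : ∀ U : Matrix (Fin n) (Fin r) ℝ,
      (∃ O : Matrix (Fin r) (Fin r) ℝ, O * Oᵀ = 1 ∧ Xbar U = X * O) ∧
      ∀ O : Matrix (Fin r) (Fin r) ℝ, O * Oᵀ = 1 →
        Real.sqrt (∑ i, ∑ j, ((U - Xbar U) i j) ^ 2)
          ≤ Real.sqrt (∑ i, ∑ j, ((U - X * O) i j) ^ 2))
    (G : Matrix (Fin n) (Fin r) ℝ → Matrix (Fin n) (Fin r) ℝ)
    (hreg : ∀ U : Matrix (Fin n) (Fin r) ℝ,
      Real.sqrt (∑ i, ∑ j, ((U - Xbar U) i j) ^ 2) ≤ ε →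
      σr / ν * (∑ i, ∑ j, ((U - Xbar U) i j) ^ 2)
          + 1 / (lam * ∑ i, ∑ j, (X i j) ^ 2) * (∑ i, ∑ j, (G U i j) ^ 2)
        ≤ Matrix.trace ((G U)ᵀ * (U - Xbar U)))
    (Uk : Matrix (Fin n) (Fin r) ℝ)
    (hUk : Real.sqrt (∑ i, ∑ j, ((Uk - Xbar Uk) i j) ^ 2) ≤ ε)
    (hμ : μ ≤ min (ν / (2 * σr)) (2 / (lam * ∑ i, ∑ j, (X i j) ^ 2))) :
    Real.sqrt (∑ i, ∑ j, ((Uk - μ • G Uk - Xbar (Uk - μ • G Uk)) i j) ^ 2)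
      ≤ Real.sqrt (1 - 2 * μ * σr / ν)
          * Real.sqrt (∑ i, ∑ j, ((Uk - Xbar Uk) i j) ^ 2) := by
  have hSX0 : 0 ≤ ∑ i, ∑ j, (X i j) ^ 2 :=
    Finset.sum_nonneg fun i _ => Finset.sum_nonneg fun j _ => sq_nonneg _
  have hpos : 0 < lam * ∑ i, ∑ j, (X i j) ^ 2 := by
    rcases (mul_nonneg hlam.le hSX0).lt_or_eq with h | h
    · exact h
    · exfalso
      have h2 := le_trans hμ (min_le_right _ _)
      rw [← h, div_zero] at h2
      linarith
  set V := Uk - μ • G Uk with hV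
  obtain ⟨⟨O, hO, hXO⟩, _⟩ := hXbar Uk
  have h1 : Real.sqrt (∑ i, ∑ j, ((V - Xbar V) i j) ^ 2)
      ≤ Real.sqrt (∑ i, ∑ j, ((V - Xbar Uk) i j) ^ 2) := by
    have h := (hXbar V).2 O hO
    rwa [← hXO] at h
  have hS0 : 0 ≤ ∑ i, ∑ j, ((Uk - Xbar Uk) i j) ^ 2 :=
    Finset.sum_nonneg fun i _ => Finset.sum_nonneg fun j _ => sq_nonneg _
  have hGG0 : 0 ≤ ∑ i, ∑ j, (G Uk i j) ^ 2 :=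
    Finset.sum_nonneg fun i _ => Finset.sum_nonneg fun j _ => sq_nonneg _
  have hT : Matrix.trace ((G Uk)ᵀ * (Uk - Xbar Uk))
      = ∑ i, ∑ j, (G Uk i j) * ((Uk - Xbar Uk) i j) := by
    rw [Matrix.trace]
    simp only [Matrix.diag_apply, Matrix.mul_apply, Matrix.transpose_apply]
    rw [Finset.sum_comm]
  have hreg' := hreg Uk hUk
  rw [hT] at hreg'
  have hexp : (∑ i, ∑ j, ((V - Xbar Uk) i j) ^ 2)
      = (∑ i, ∑ j, ((Uk - Xbar Uk) i j) ^ 2)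
        - 2 * μ * (∑ i, ∑ j, (G Uk i j) * ((Uk - Xbar Uk) i j))
        + μ ^ 2 * (∑ i, ∑ j, (G Uk i j) ^ 2) := by
    have hij : ∀ i j, ((V - Xbar Uk) i j) ^ 2
        = ((Uk - Xbar Uk) i j) ^ 2
          - 2 * μ * ((G Uk i j) * ((Uk - Xbar Uk) i j))
          + μ ^ 2 * (G Uk i j) ^ 2 := by
      intro i j
      simp only [hV, Matrix.sub_apply, Matrix.smul_apply, smul_eq_mul]
      ring
    simp_rw [hij, Finset.sum_add_distrib, Finset.sum_sub_distrib, ← Finset.mul_sum]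
  have hcoef : 0 ≤ 1 - 2 * μ * σr / ν := by
    have h2 := le_trans hμ (min_le_left _ _)
    rw [le_div_iff₀ (by positivity)] at h2
    rw [sub_nonneg, div_le_one hν]
    linarith
  have hkey : (∑ i, ∑ j, ((V - Xbar Uk) i j) ^ 2)
      ≤ (1 - 2 * μ * σr / ν) * (∑ i, ∑ j, ((Uk - Xbar Uk) i j) ^ 2) := by
    have h2 := le_trans hμ (min_le_right _ _)
    rw [le_div_iff₀ hpos] at h2
    have hμ2c : μ ≤ 2 * (1 / (lam * ∑ i, ∑ j, (X i j) ^ 2)) := by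
      rw [mul_one_div, le_div_iff₀ hpos]
      linarith
    have hA := mul_le_mul_of_nonneg_left hreg' (by linarith : (0:ℝ) ≤ 2 * μ)
    have hB : 0 ≤ μ * (∑ i, ∑ j, (G Uk i j) ^ 2)
        * (2 * (1 / (lam * ∑ i, ∑ j, (X i j) ^ 2)) - μ) :=
      mul_nonneg (mul_nonneg hμ0.le hGG0) (by linarith)
    have hdiv : 2 * μ * σr / ν = 2 * μ * (σr / ν) := by ring
    rw [hexp, hdiv]
    nlinarith [hA, hB]
  calc Real.sqrt (∑ i, ∑ j, ((V - Xbar V) i j) ^ 2)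
      ≤ Real.sqrt (∑ i, ∑ j, ((V - Xbar Uk) i j) ^ 2) := h1
    _ ≤ Real.sqrt ((1 - 2 * μ * σr / ν) * (∑ i, ∑ j, ((Uk - Xbar Uk) i j) ^ 2)) :=
        Real.sqrt_le_sqrt hkey
    _ = Real.sqrt (1 - 2 * μ * σr / ν) * Real.sqrt (∑ i, ∑ j, ((Uk - Xbar Uk) i j) ^ 2) :=
        Real.sqrt_mul hcoef _
end

section
/- Let U₀, X ∈ R^{n×r} with X of rank r, and let σ_r > 0 be the smallest nonzero eigenvalue of XXᵀ. Then min_{O ∈ O(r)} ‖U₀ − XO‖_F² ≤ ‖U₀U₀ᵀ − XXᵀ‖_F² / ((2√2 − 2)σ_r). -/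
/-!
Choose `O` minimising `‖U₀ - XW‖_F` over the (compact) orthogonal group. Expanding the objective,
`O` maximises `W ↦ tr (U₀ᵀ X W)`, and testing this against plane rotations and reflections shows
that `S = U₀ᵀ (XO)` is symmetric positive semidefinite.

Put `B = XO`, `Δ = U₀ - B`, `G = ΔᵀΔ`, `T = ΔᵀB` and `R = BᵀB ⪰ σ_r`. Since `T = S - R` is
symmetric,
`‖U₀U₀ᵀ - BBᵀ‖² = tr G² + 2 tr T² + 4 tr GT + 2 tr GR
  = ‖G + √2 T‖² + (4 - 2√2) tr GS + (2√2 - 2) tr GR`,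
and the first two terms are nonnegative while `tr GR ≥ σ_r tr G = σ_r ‖Δ‖²`.
-/

open Matrix
open scoped ComplexOrder Pointwise Real

namespace Matrix

theorem trace_transpose_mul_self_eq_sum_sq {m n R : Type*} [Fintype m] [Fintype n]
    [CommSemiring R] (M : Matrix m n R) : (Mᵀ * M).trace = ∑ i, ∑ j, M i j ^ 2 := by
  rw [trace, Finset.sum_comm]
  simp [mul_apply, sq]

section OrthogonalGroup

variable {n : Type*} [Fintype n] [DecidableEq n]

theorem abs_apply_le_one_of_mem_orthogonalGroup {W : Matrix n n ℝ}
    (hW : W ∈ orthogonalGroup n ℝ) (i j : n) : |W i j| ≤ 1 := by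
  have hrow : ∑ k, W i k ^ 2 = 1 := by
    simpa [mul_apply, sq] using congr_fun₂ ((mem_orthogonalGroup_iff n ℝ).mp hW) i i
  rw [← abs_one, ← sq_le_sq, one_pow, ← hrow]
  exact Finset.single_le_sum (f := fun k => W i k ^ 2) (fun k _ => sq_nonneg _)
    (Finset.mem_univ j)

theorem isCompact_orthogonalGroup : IsCompact (orthogonalGroup n ℝ : Set (Matrix n n ℝ)) := by
  have hclosed : IsClosed (orthogonalGroup n ℝ : Set (Matrix n n ℝ)) := by
    have : (orthogonalGroup n ℝ : Set (Matrix n n ℝ)) = (fun W => W * Wᵀ) ⁻¹' {1} := by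
      ext W; exact mem_orthogonalGroup_iff n ℝ
    rw [this]
    exact isClosed_singleton.preimage (continuous_id.matrix_mul continuous_id.matrix_transpose)
  refine (isCompact_univ_pi fun _ => isCompact_univ_pi fun _ => isCompact_Icc
    (a := (-1 : ℝ)) (b := 1)).of_isClosed_subset hclosed fun W hW => ?_
  simp only [Set.mem_univ_pi]
  exact fun i j => abs_le.mp (abs_apply_le_one_of_mem_orthogonalGroup hW i j)

end OrthogonalGroup

section Reflections

variable {n R : Type*} [Fintype n] [DecidableEq n]

/-- The reflection in the hyperplane `v^⊥`; when `v ⬝ᵥ v = 0`, the junk value `2 / 0 = 0` makes it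
the identity. -/
def householder [Field R] (v : n → R) : Matrix n n R := 1 - (2 / (v ⬝ᵥ v)) • vecMulVec v v

theorem householder_mem_orthogonalGroup [Field R] (v : n → R) :
    householder v ∈ orthogonalGroup n R := by
  rw [mem_orthogonalGroup_iff]
  by_cases hv : v ⬝ᵥ v = 0
  · simp [householder, hv]
  simp only [householder, transpose_sub, transpose_one, transpose_smul, transpose_vecMulVec,
    Matrix.sub_mul, Matrix.mul_sub, Matrix.smul_mul, Matrix.mul_smul, Matrix.one_mul,
    Matrix.mul_one, vecMulVec_mul_vecMulVec, vecMulVec_smul, smul_smul]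
  rw [div_mul_cancel₀ (2 : R) hv]
  module

theorem trace_mul_householder [Field R] (K : Matrix n n R) (v : n → R) :
    (K * householder v).trace = K.trace - 2 / (v ⬝ᵥ v) * (v ⬝ᵥ K *ᵥ v) := by
  simp [householder, Matrix.mul_sub, mul_vecMulVec, dotProduct_comm]

/-- Rotation by the angle with cosine `c` and sine `s` in the plane spanned by `u` and `w`. -/
def planeRotation [CommRing R] (u w : n → R) (c s : R) : Matrix n n R :=
  1 + (c - 1) • (vecMulVec u u + vecMulVec w w) + s • (vecMulVec u w - vecMulVec w u)

theorem planeRotation_mem_orthogonalGroup [CommRing R] {u w : n → R} (hu : u ⬝ᵥ u = 1)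
    (hw : w ⬝ᵥ w = 1) (huw : u ⬝ᵥ w = 0) {c s : R} (hcs : c ^ 2 + s ^ 2 = 1) :
    planeRotation u w c s ∈ orthogonalGroup n R := by
  have hwu : w ⬝ᵥ u = 0 := by rwa [dotProduct_comm]
  rw [mem_orthogonalGroup_iff]
  simp only [planeRotation, transpose_add, transpose_sub, transpose_one, transpose_smul,
    transpose_vecMulVec, Matrix.add_mul, Matrix.mul_add, Matrix.sub_mul, Matrix.mul_sub,
    Matrix.smul_mul, Matrix.mul_smul, Matrix.one_mul, Matrix.mul_one, vecMulVec_mul_vecMulVec,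
    hu, hw, huw, hwu, one_smul, zero_smul, vecMulVec_zero, add_zero, sub_zero]
  linear_combination (norm := module) hcs • (vecMulVec u u + vecMulVec w w)

theorem trace_mul_planeRotation [CommRing R] (K : Matrix n n R) (u w : n → R) (c s : R) :
    (K * planeRotation u w c s).trace = K.trace + (c - 1) * (u ⬝ᵥ K *ᵥ u + w ⬝ᵥ K *ᵥ w)
      + s * (w ⬝ᵥ K *ᵥ u - u ⬝ᵥ K *ᵥ w) := by
  simp [planeRotation, mul_add, mul_sub, mul_vecMulVec, dotProduct_comm]

end Reflections

section TraceMaximizer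

variable {n : Type*} [Fintype n] [DecidableEq n]

theorem isSymm_of_forall_trace_mul_le {K : Matrix n n ℝ}
    (h : ∀ Q ∈ orthogonalGroup n ℝ, (K * Q).trace ≤ K.trace) : K.IsSymm := by
  refine IsSymm.ext fun i j => ?_
  rcases eq_or_ne i j with rfl | hij
  · rfl
  -- rotations by the angles with `tan (θ / 2) = t` make this quadratic in `t` nonnegative
  have hquad : ∀ t : ℝ, 0 ≤ (K i i + K j j) * (t * t) + (K i j - K j i) * t + 0 := fun t => by
    have hcs : ((1 - t ^ 2) / (1 + t ^ 2)) ^ 2 + (2 * t / (1 + t ^ 2)) ^ 2 = 1 := by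
      field_simp; ring
    have hrot := h _ (planeRotation_mem_orthogonalGroup (u := Pi.single i 1)
      (w := Pi.single j 1) (by simp) (by simp) (by simp [hij]) hcs)
    simp only [trace_mul_planeRotation, mulVec_single_one, single_one_dotProduct,
      col_apply] at hrot
    have hgap : K.trace - (K.trace + ((1 - t ^ 2) / (1 + t ^ 2) - 1) * (K i i + K j j)
        + 2 * t / (1 + t ^ 2) * (K j i - K i j))
        = 2 / (1 + t ^ 2) * ((K i i + K j j) * (t * t) + (K i j - K j i) * t + 0) := by
      field_simp; ring
    exact (mul_nonneg_iff_of_pos_left (by positivity)).mp (hgap ▸ sub_nonneg.mpr hrot)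
  have hdiscr := discrim_le_zero hquad
  rw [discrim] at hdiscr
  nlinarith [sq_nonneg (K i j - K j i)]

theorem posSemidef_of_forall_trace_mul_le {K : Matrix n n ℝ}
    (h : ∀ Q ∈ orthogonalGroup n ℝ, (K * Q).trace ≤ K.trace) : K.PosSemidef := by
  refine .of_dotProduct_mulVec_nonneg (isSymm_of_forall_trace_mul_le h) fun v => ?_
  rw [star_trivial]
  rcases eq_or_ne v 0 with rfl | hv
  · simp
  have hvv : 0 < v ⬝ᵥ v := by
    simpa using (dotProduct_star_self_nonneg v).lt_of_ne' (dotProduct_self_eq_zero.not.mpr hv)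
  have hrefl := h _ (householder_mem_orthogonalGroup v)
  rw [trace_mul_householder] at hrefl
  have : 0 < 2 / (v ⬝ᵥ v) := by positivity
  nlinarith

variable {m : Type*} [Fintype m]

theorem trace_sq_sub_mul_orthogonal (A B : Matrix m n ℝ) {W : Matrix n n ℝ}
    (hW : W ∈ orthogonalGroup n ℝ) :
    ((A - B * W)ᵀ * (A - B * W)).trace
      = (Aᵀ * A).trace + (Bᵀ * B).trace - 2 * (Aᵀ * B * W).trace := by
  have hBW : ((B * W)ᵀ * (B * W)).trace = (Bᵀ * B).trace := by
    rw [transpose_mul, Matrix.mul_assoc, trace_mul_comm, Matrix.mul_assoc, Matrix.mul_assoc,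
      (mem_orthogonalGroup_iff n ℝ).mp hW, Matrix.mul_one]
  have hcross : ((B * W)ᵀ * A).trace = (Aᵀ * B * W).trace := by
    rw [← trace_transpose, transpose_mul, transpose_transpose, Matrix.mul_assoc]
  simp only [transpose_sub, Matrix.sub_mul, Matrix.mul_sub, trace_sub, hBW, hcross,
    Matrix.mul_assoc]
  ring

theorem posSemidef_transpose_mul_of_isMinOn (A B : Matrix m n ℝ) {O : Matrix n n ℝ}
    (hO : O ∈ orthogonalGroup n ℝ)
    (hmin : IsMinOn (fun W => ((A - B * W)ᵀ * (A - B * W)).trace) (orthogonalGroup n ℝ) O) :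
    (Aᵀ * (B * O)).PosSemidef := by
  refine posSemidef_of_forall_trace_mul_le fun Q hQ => ?_
  have hOQ := isMinOn_iff.mp hmin _ (mul_mem hO hQ)
  simp only [trace_sq_sub_mul_orthogonal A B hO,
    trace_sq_sub_mul_orthogonal A B (mul_mem hO hQ)] at hOQ
  simp only [Matrix.mul_assoc] at hOQ ⊢
  linarith

end TraceMaximizer

theorem IsHermitian.posSemidef_sub_smul_one_of_le_eigenvalues {n 𝕜 : Type*} [Fintype n]
    [DecidableEq n] [RCLike 𝕜] {A : Matrix n n 𝕜} (hA : A.IsHermitian) {c : ℝ}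
    (h : ∀ i, c ≤ hA.eigenvalues i) :
    (A - c • (1 : Matrix n n 𝕜)).PosSemidef := by
  have hB : (A - c • (1 : Matrix n n 𝕜)).IsHermitian := hA.sub (by simp [IsHermitian])
  rw [hB.posSemidef_iff_eigenvalues_nonneg]
  intro i
  have hspec : spectrum ℝ (A - c • (1 : Matrix n n 𝕜)) = Set.range hA.eigenvalues - {c} := by
    rw [← hA.spectrum_real_eq_range_eigenvalues, spectrum.sub_singleton_eq,
      Algebra.algebraMap_eq_smul_one]
  obtain ⟨_, ⟨j, rfl⟩, _, rfl, hj⟩ := hspec ▸ hB.eigenvalues_mem_spectrum_real i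
  simp only [Pi.zero_apply, ← hj]
  linarith [h j]

section GramDifference

variable {m n : Type*} [Fintype m] [Fintype n]

theorem trace_sq_mul_transpose_sub {R : Type*} [CommRing R] (A B : Matrix m n R) :
    ((A * Aᵀ - B * Bᵀ)ᵀ * (A * Aᵀ - B * Bᵀ)).trace
      = (Aᵀ * A * (Aᵀ * A)).trace + (Bᵀ * B * (Bᵀ * B)).trace
        - 2 * (Aᵀ * B * (Bᵀ * A)).trace := by
  have hcycle : ∀ C D E F : Matrix m n R,
      (C * Dᵀ * (E * Fᵀ)).trace = (Dᵀ * E * (Fᵀ * C)).trace :=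
    fun C D E F => by rw [Matrix.mul_assoc, trace_mul_comm]; simp only [Matrix.mul_assoc]
  simp only [transpose_sub, transpose_mul, transpose_transpose, Matrix.sub_mul, Matrix.mul_sub,
    trace_sub, hcycle]
  rw [trace_mul_comm (Bᵀ * A)]
  ring

theorem trace_transpose_mul_self_mul_nonneg (D : Matrix m n ℝ) {K : Matrix n n ℝ}
    (hK : K.PosSemidef) : 0 ≤ (Dᵀ * D * K).trace := by
  rw [Matrix.mul_assoc, trace_mul_comm, ← conjTranspose_eq_transpose_of_trivial]
  exact (hK.mul_mul_conjTranspose_same D).trace_nonneg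

theorem trace_sq_add_smul_nonneg {G T : Matrix n n ℝ} (hG : Gᵀ = G) (hT : Tᵀ = T) (a : ℝ) :
    0 ≤ (G * G).trace + 2 * a * (G * T).trace + a ^ 2 * (T * T).trace := by
  have := trace_transpose_mul_self_eq_sum_sq (G + a • T) ▸
    Finset.sum_nonneg fun i _ => Finset.sum_nonneg fun j _ => sq_nonneg ((G + a • T) i j)
  simp only [transpose_add, transpose_smul, hG, hT, Matrix.add_mul, Matrix.mul_add,
    Matrix.smul_mul, Matrix.mul_smul, trace_add, trace_smul, smul_eq_mul, trace_mul_comm T G]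
    at this
  linarith

theorem mul_trace_le_trace_sq_mul_transpose_sub [DecidableEq n] (A B : Matrix m n ℝ) (c : ℝ)
    (hS : (Aᵀ * B).PosSemidef) (hR : (Bᵀ * B - c • 1).PosSemidef) :
    (2 * √2 - 2) * c * ((A - B)ᵀ * (A - B)).trace
      ≤ ((A * Aᵀ - B * Bᵀ)ᵀ * (A * Aᵀ - B * Bᵀ)).trace := by
  obtain ⟨D, rfl⟩ : ∃ D, A = D + B := ⟨A - B, by simp⟩
  rw [add_sub_cancel_right]
  set G := Dᵀ * D
  set T := Dᵀ * B
  set R := Bᵀ * B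
  have hS_eq : (D + B)ᵀ * B = T + R := by rw [transpose_add, Matrix.add_mul]
  have hT : Tᵀ = T := by
    have := hS.isHermitian.eq
    rw [conjTranspose_eq_transpose_of_trivial, hS_eq, transpose_add] at this
    simpa [R, transpose_mul] using this
  have hS_eq' : Bᵀ * (D + B) = T + R := by
    rw [← transpose_transpose (Bᵀ * (D + B)), transpose_mul, transpose_transpose, hS_eq,
      transpose_add, hT, transpose_mul, transpose_transpose]
  have hP_eq : (D + B)ᵀ * (D + B) = G + 2 • T + R := by
    have : Bᵀ * D = T := by rw [← hT, transpose_mul, transpose_transpose]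
    rw [transpose_add, Matrix.add_mul, Matrix.mul_add, Matrix.mul_add, this, two_smul]
    abel
  have hexpand : (((D + B) * (D + B)ᵀ - B * Bᵀ)ᵀ * ((D + B) * (D + B)ᵀ - B * Bᵀ)).trace
      = (G * G).trace + 2 * (T * T).trace + 4 * (G * T).trace + 2 * (G * R).trace := by
    rw [trace_sq_mul_transpose_sub, hP_eq, hS_eq, hS_eq', show Bᵀ * B = R from rfl]
    simp only [add_mul, mul_add, trace_add, Matrix.smul_mul, Matrix.mul_smul, trace_smul]
    rw [trace_mul_comm T G, trace_mul_comm R G, trace_mul_comm R T]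
    ring
  have hGS : 0 ≤ (G * T).trace + (G * R).trace := by
    rw [hS_eq] at hS
    simpa [Matrix.mul_add] using trace_transpose_mul_self_mul_nonneg D hS
  have hGR : c * G.trace ≤ (G * R).trace := by
    simpa [Matrix.mul_sub, sub_nonneg] using trace_transpose_mul_self_mul_nonneg D hR
  have hsq := trace_sq_add_smul_nonneg (G := G) (by simp [G, transpose_mul]) hT √2
  rw [Real.sq_sqrt zero_le_two] at hsq
  have hsqrt_le : √2 ≤ 2 := by
    nlinarith [Real.sq_sqrt (zero_le_two (α := ℝ)), Real.sqrt_nonneg 2]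
  have hsqrt_ge : 1 ≤ √2 := Real.one_le_sqrt.mpr one_le_two
  rw [hexpand]
  nlinarith [mul_nonneg (sub_nonneg.mpr hsqrt_le) hGS,
    mul_le_mul_of_nonneg_left hGR (by linarith : (0 : ℝ) ≤ 2 * √2 - 2)]

end GramDifference

end Matrix

theorem dist_factor_le_gram_general (n r : ℕ) (X U₀ : Matrix (Fin n) (Fin r) ℝ)
    (σr : ℝ) (hσpos : 0 < σr)
    (hσ : IsLeast (Set.range (Matrix.isHermitian_conjTranspose_mul_self X).eigenvalues) σr) :
    ∃ O : Matrix (Fin r) (Fin r) ℝ, O * Oᵀ = 1 ∧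
      (∀ O' : Matrix (Fin r) (Fin r) ℝ, O' * O'ᵀ = 1 →
        ∑ i, ∑ j, ((U₀ - X * O) i j) ^ 2 ≤ ∑ i, ∑ j, ((U₀ - X * O') i j) ^ 2) ∧
      ∑ i, ∑ j, ((U₀ - X * O) i j) ^ 2
        ≤ (∑ i, ∑ j, ((U₀ * U₀ᵀ - X * Xᵀ) i j) ^ 2) / ((2 * Real.sqrt 2 - 2) * σr) := by
  simp only [← trace_transpose_mul_self_eq_sum_sq]
  obtain ⟨O, hO, hmin⟩ := isCompact_orthogonalGroup.exists_isMinOn ⟨1, one_mem _⟩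
    (f := fun W => ((U₀ - X * W)ᵀ * (U₀ - X * W)).trace) (by fun_prop)
  refine ⟨O, (mem_orthogonalGroup_iff _ _).mp hO,
    fun O' hO' => hmin ((mem_orthogonalGroup_iff _ _).mpr hO'), ?_⟩
  have hXX : (Xᵀ * X - σr • 1).PosSemidef := by
    simpa using (isHermitian_conjTranspose_mul_self X).posSemidef_sub_smul_one_of_le_eigenvalues
      fun i => hσ.2 ⟨i, rfl⟩
  have hR : ((X * O)ᵀ * (X * O) - σr • 1).PosSemidef := by
    have hOO : Oᵀ * O = 1 := (mem_orthogonalGroup_iff' _ _).mp hO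
    simpa [Matrix.mul_sub, Matrix.sub_mul, Matrix.mul_assoc, hOO, transpose_mul]
      using hXX.conjTranspose_mul_mul_same O
  have hbound := mul_trace_le_trace_sq_mul_transpose_sub U₀ (X * O) σr
    (posSemidef_transpose_mul_of_isMinOn U₀ X hO hmin) hR
  rw [show X * O * (X * O)ᵀ = X * Xᵀ by
    rw [transpose_mul, Matrix.mul_assoc, ← Matrix.mul_assoc O,
      (mem_orthogonalGroup_iff _ _).mp hO, Matrix.one_mul]] at hbound
  rw [le_div_iff₀ (by nlinarith [Real.one_lt_sqrt_two])]
  linarith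

/-- Distance bound between low-rank factors in terms of their Gram matrices:
`min_{O ∈ O(r)} ‖U₀ − XO‖_F² ≤ ‖U₀U₀ᵀ − XXᵀ‖_F² / ((2√2 − 2)σ_r)`, where `σ_r > 0`
is the smallest nonzero eigenvalue of `XXᵀ` (equivalently the smallest eigenvalue
of `XᵀX` when `rank X = r`). -/
theorem dist_factor_le_gram (n r : ℕ) (X U₀ : Matrix (Fin n) (Fin r) ℝ)
    (hrank : X.rank = r) (σr : ℝ) (hσpos : 0 < σr)
    (hσ : IsLeast (Set.range (Matrix.isHermitian_conjTranspose_mul_self X).eigenvalues) σr) :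
    ∃ O : Matrix (Fin r) (Fin r) ℝ, O * Oᵀ = 1 ∧
      (∀ O' : Matrix (Fin r) (Fin r) ℝ, O' * O'ᵀ = 1 →
        ∑ i, ∑ j, ((U₀ - X * O) i j) ^ 2 ≤ ∑ i, ∑ j, ((U₀ - X * O') i j) ^ 2) ∧
      ∑ i, ∑ j, ((U₀ - X * O) i j) ^ 2
        ≤ (∑ i, ∑ j, ((U₀ * U₀ᵀ - X * Xᵀ) i j) ^ 2) / ((2 * Real.sqrt 2 - 2) * σr) :=
  dist_factor_le_gram_general n r X U₀ σr hσpos hσ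
end
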